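/- arXiv:2003.08255 — 4 statements merged into one kernel-verified Lean document; each statement's English description precedes it below -/
import Mathlib

section
/- Let H be a finite simple graph with at least one edge and let G = KG(H) be the complement of the line graph of H. Then the local chromatic number of G equals its chromatic number: ψ(G) = χ(G). -/
open SimpleGraph

/-- `KG H` is the complement of the line graph of `H`: its vertices are the edges of `H`,
two of them being adjacent exactly when the corresponding edges of `H` are disjoint. -/
def KG {V : Type*} (H : SimpleGraph V) : SimpleGraph H.edgeSet where
  Adj e f := e ≠ f ∧ ∀ v, v ∈ (e : Sym2 V) → v ∉ (f : Sym2 V)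
  symm := by
    constructor
    rintro e f ⟨hne, h⟩
    exact ⟨hne.symm, fun v hvf hve => h v hve hvf⟩
  loopless := by
    constructor
    rintro e ⟨hne, -⟩
    exact hne rfl

/-- A proper coloring of a graph with colors in `ℕ`. -/
def IsProperColoring {W : Type*} (G : SimpleGraph W) (c : W → ℕ) : Prop :=
  ∀ ⦃u v⦄, G.Adj u v → c u ≠ c v

/-- The chromatic number: least `n` such that `G` has a proper coloring with `n` colors. -/
noncomputable def chromNum {W : Type*} (G : SimpleGraph W) : ℕ :=
  sInf {n | G.Colorable n}

/-- Number of colors appearing on the closed neighborhood of `v` under the coloring `c`. -/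
noncomputable def closedNbhdColors {W : Type*} (G : SimpleGraph W) (c : W → ℕ) (v : W) : ℕ :=
  (c '' {u | u = v ∨ G.Adj v u}).ncard

/-- The local chromatic number: the minimum over proper colorings of the maximum
number of colors in a closed neighborhood. -/
noncomputable def localChromNum {W : Type*} (G : SimpleGraph W) : ℕ :=
  sInf {t | ∃ c : W → ℕ, IsProperColoring G c ∧ ∀ v, closedNbhdColors G c v ≤ t}

/-!
Take a proper coloring `c` of `KG H` with at most `t` colors on every closed neighborhood; we
show that `KG H` is `t`-colorable, by induction on `t` and then on the number of colors of `c`.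
Two color classes with no disjoint pair of edges between them can be merged. Otherwise, if more
than `t` colors are used, some color `κ` is missing from the closed neighborhood of some edge
`e`, so the class of `κ` is an intersecting family of edges all meeting `e`, hence a star at a
vertex `u`. Removing the edges at `u` lowers the local bound to `t - 1`, and the edges at `u`,
being pairwise intersecting, then share one new color.
-/

section ClosedNbhdColors

variable {W W' : Type*} {G : SimpleGraph W} {G' : SimpleGraph W'} {c : W → ℕ}

def closedNbhdColorSet (G : SimpleGraph W) (c : W → ℕ) (v : W) : Set ℕ :=
  c '' {u | u = v ∨ G.Adj v u}

lemma closedNbhdColors_eq_ncard (v : W) :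
    closedNbhdColors G c v = (closedNbhdColorSet G c v).ncard := rfl

lemma apply_mem_closedNbhdColorSet (v : W) : c v ∈ closedNbhdColorSet G c v :=
  ⟨v, Or.inl rfl, rfl⟩

lemma SimpleGraph.Adj.apply_mem_closedNbhdColorSet {v w : W} (h : G.Adj v w) :
    c w ∈ closedNbhdColorSet G c v :=
  ⟨w, Or.inr h, rfl⟩

lemma closedNbhdColorSet_finite [Finite W] (v : W) : (closedNbhdColorSet G c v).Finite :=
  (Set.toFinite _).image c

lemma closedNbhdColors_pos [Finite W] (v : W) : 0 < closedNbhdColors G c v :=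
  (Set.ncard_pos (closedNbhdColorSet_finite v)).mpr ⟨_, apply_mem_closedNbhdColorSet v⟩

lemma closedNbhdColorSet_comp (m : ℕ → ℕ) (v : W) :
    closedNbhdColorSet G (m ∘ c) v = m '' closedNbhdColorSet G c v :=
  Set.image_comp m c _

lemma closedNbhdColors_comp_le [Finite W] (m : ℕ → ℕ) (v : W) :
    closedNbhdColors G (m ∘ c) v ≤ closedNbhdColors G c v := by
  rw [closedNbhdColors_eq_ncard, closedNbhdColorSet_comp]
  exact Set.ncard_image_le (closedNbhdColorSet_finite v)

lemma closedNbhdColorSet_comp_hom_subset (φ : G' →g G) (v : W') :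
    closedNbhdColorSet G' (c ∘ φ) v ⊆ closedNbhdColorSet G c (φ v) := by
  rintro _ ⟨w, rfl | hw, rfl⟩
  · exact apply_mem_closedNbhdColorSet _
  · exact (φ.map_adj hw).apply_mem_closedNbhdColorSet

lemma IsProperColoring.comp_hom (hc : IsProperColoring G c) (φ : G' →g G) :
    IsProperColoring G' (c ∘ φ) :=
  fun _ _ h => hc (φ.map_adj h)

lemma IsProperColoring.colorable [Finite W] (hc : IsProperColoring G c) :
    G.Colorable (Set.range c).ncard := by
  have := Fintype.ofFinite W
  have := (SimpleGraph.Coloring.mk (fun w => (⟨c w, w, rfl⟩ : Set.range c))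
    fun h heq => hc h (congrArg Subtype.val heq)).colorable
  rwa [← Nat.card_eq_fintype_card, Nat.card_coe_set_eq] at this

lemma IsProperColoring.merge (hc : IsProperColoring G c) {a b : ℕ}
    (hab : ∀ v w, c v = a → c w = b → ¬ G.Adj v w) :
    IsProperColoring G (Function.update id b a ∘ c) := by
  intro v w hvw
  simp only [Function.comp_apply, Function.update_apply, id]
  split_ifs with hv hw hw
  · exact (hc hvw (hv.trans hw.symm)).elim
  · exact fun h => hab w v h.symm hv hvw.symm
  · exact fun h => hab v w h hw hvw
  · exact hc hvw

lemma ncard_range_merge_lt [Finite W] {a b : ℕ} (ha : a ∈ Set.range c) (hb : b ∈ Set.range c)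
    (hab : a ≠ b) : (Set.range (Function.update id b a ∘ c)).ncard < (Set.range c).ncard := by
  have hsub : Set.range (Function.update id b a ∘ c) ⊆ Set.range c \ {b} := by
    rintro _ ⟨w, rfl⟩
    simp only [Function.comp_apply, Function.update_apply, id]
    split_ifs with h
    · exact ⟨ha, hab⟩
    · exact ⟨⟨w, rfl⟩, h⟩
  exact (Set.ncard_le_ncard hsub).trans_lt (Set.ncard_sdiff_singleton_lt_of_mem hb)

lemma exists_closedNbhdColors_le_of_colorable {n : ℕ} (h : G.Colorable n) :
    ∃ c, IsProperColoring G c ∧ ∀ v, closedNbhdColors G c v ≤ n := by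
  obtain ⟨C, hC⟩ := (SimpleGraph.colorable_iff_exists_bdd_nat_coloring n).mp h
  refine ⟨C, fun _ _ => C.valid, fun v => ?_⟩
  calc closedNbhdColors G C v ≤ (Set.Iio n).ncard := by
        refine Set.ncard_le_ncard ?_ (Set.finite_Iio n)
        rintro _ ⟨w, -, rfl⟩
        exact hC w
    _ = n := Set.ncard_Iio_nat n

lemma localChromNum_le_of_colorable {n : ℕ} (h : G.Colorable n) : localChromNum G ≤ n :=
  Nat.sInf_le (exists_closedNbhdColors_le_of_colorable h)

lemma exists_closedNbhdColors_le_localChromNum [Finite W] (G : SimpleGraph W) :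
    ∃ c, IsProperColoring G c ∧ ∀ v, closedNbhdColors G c v ≤ localChromNum G :=
  have := Fintype.ofFinite W
  Nat.sInf_mem (s := {t | ∃ c, IsProperColoring G c ∧ ∀ v, closedNbhdColors G c v ≤ t})
    ⟨_, exists_closedNbhdColors_le_of_colorable G.colorable_of_fintype⟩

lemma colorable_chromNum [Finite W] (G : SimpleGraph W) : G.Colorable (chromNum G) :=
  have := Fintype.ofFinite W
  Nat.sInf_mem (s := {n | G.Colorable n}) ⟨_, G.colorable_of_fintype⟩

lemma exists_notMem_closedNbhdColorSet [Finite W] {t : ℕ}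
    (hb : ∀ v, closedNbhdColors G c v ≤ t) (ht : t < (Set.range c).ncard) :
    ∃ v, ∃ κ ∈ Set.range c, κ ∉ closedNbhdColorSet G c v := by
  obtain ⟨_, v, rfl⟩ := (Set.ncard_pos (Set.finite_range c)).mp (by omega)
  refine ⟨v, Set.not_subset.mp fun hsub => ?_⟩
  have := (Set.ncard_le_ncard hsub (closedNbhdColorSet_finite v)).trans (hb v)
  omega

end ClosedNbhdColors

lemma Sym2.mem_or_mem_of_exists_mem_mk {V : Type*} {x : Sym2 V} {p q : V}
    (h : ∃ v ∈ s(p, q), v ∈ x) : p ∈ x ∨ q ∈ x := by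
  obtain ⟨v, hv, hvx⟩ := h
  rcases Sym2.mem_iff.mp hv with rfl | rfl
  exacts [Or.inl hvx, Or.inr hvx]

/-- If no vertex lies on all members, `S` contains the two other sides of a triangle on `e`,
and every member of `S` meeting both of them must be `e` itself. -/
theorem Sym2.exists_forall_mem_of_pairwise_meet {V : Type*} {e : Sym2 V} {S : Set (Sym2 V)}
    (heS : e ∉ S) (hS : ∀ x ∈ S, ∀ y ∈ S, ∃ v ∈ x, v ∈ y) (he : ∀ x ∈ S, ∃ v ∈ e, v ∈ x) :
    ∃ u, ∀ x ∈ S, u ∈ x := by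
  induction e using Sym2.ind with | _ a b =>
  by_cases ha : ∀ x ∈ S, a ∈ x
  · exact ⟨a, ha⟩
  by_cases hb : ∀ x ∈ S, b ∈ x
  · exact ⟨b, hb⟩
  push Not at ha hb
  obtain ⟨g₁, hg₁, ha₁⟩ := ha
  obtain ⟨g₂, hg₂, hb₂⟩ := hb
  have hb₁ : b ∈ g₁ := (mem_or_mem_of_exists_mem_mk (he g₁ hg₁)).resolve_left ha₁
  have ha₂ : a ∈ g₂ := (mem_or_mem_of_exists_mem_mk (he g₂ hg₂)).resolve_right hb₂
  have hab : a ≠ b := by rintro rfl; exact ha₁ hb₁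
  obtain ⟨z, rfl⟩ := Sym2.mem_iff_exists.mp hb₁
  have hz₂ : z ∈ g₂ := (mem_or_mem_of_exists_mem_mk (hS _ hg₁ g₂ hg₂)).resolve_left hb₂
  have haz : a ≠ z := by rintro rfl; exact ha₁ (Sym2.mem_mk_right b a)
  rw [(Sym2.mem_and_mem_iff haz).mp ⟨ha₂, hz₂⟩] at hg₂
  refine ⟨z, fun x hx => by_contra fun hzx => heS ?_⟩
  have hbx : b ∈ x := (mem_or_mem_of_exists_mem_mk (hS _ hg₁ x hx)).resolve_right hzx
  have hax : a ∈ x := (mem_or_mem_of_exists_mem_mk (hS _ hg₂ x hx)).resolve_right hzx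
  exact (Sym2.mem_and_mem_iff hab).mp ⟨hax, hbx⟩ ▸ hx

lemma SimpleGraph.mem_edgeSet_deleteIncidenceSet {V : Type*} {H : SimpleGraph V} {u : V}
    {e : Sym2 V} : e ∈ (H.deleteIncidenceSet u).edgeSet ↔ e ∈ H.edgeSet ∧ u ∉ e := by
  simp only [SimpleGraph.edgeSet_deleteIncidenceSet, SimpleGraph.incidenceSet, Set.mem_sdiff,
    Set.mem_ofPred_eq, not_and]
  tauto

namespace KG

variable {V : Type*} {H : SimpleGraph V}

lemma adj_iff {e f : H.edgeSet} : (KG H).Adj e f ↔ ∀ v ∈ (e : Sym2 V), v ∉ (f : Sym2 V) :=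
  ⟨And.right, fun h => ⟨fun hef => h _ (Sym2.out_fst_mem _) (hef ▸ Sym2.out_fst_mem _), h⟩⟩

lemma exists_mem_mem_of_not_adj {e f : H.edgeSet} (h : ¬ (KG H).Adj e f) :
    ∃ v ∈ (e : Sym2 V), v ∈ (f : Sym2 V) := by
  simpa [adj_iff] using h

def homOfLE {H' : SimpleGraph V} (h : H' ≤ H) : KG H' →g KG H where
  toFun e := ⟨e, SimpleGraph.edgeSet_mono h e.2⟩
  map_rel' hef := adj_iff.mpr hef.2

lemma colorable_succ_of_deleteIncidenceSet (u : V) {t : ℕ}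
    (h : (KG (H.deleteIncidenceSet u)).Colorable t) : (KG H).Colorable (t + 1) := by
  classical
  obtain ⟨C⟩ := h
  refine ⟨.mk (fun e => if hu : u ∈ (e : Sym2 V) then 0 else
    (C ⟨e, SimpleGraph.mem_edgeSet_deleteIncidenceSet.mpr ⟨e.2, hu⟩⟩).succ) fun {e f} hef => ?_⟩
  by_cases he : u ∈ (e : Sym2 V) <;> by_cases hf : u ∈ (f : Sym2 V) <;>
    simp only [he, hf, dite_true, dite_false]
  · exact (hef.2 u he hf).elim
  · exact (Fin.succ_ne_zero _).symm
  · exact Fin.succ_ne_zero _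
  · exact fun h => C.valid (adj_iff.mpr hef.2) (Fin.succ_inj.mp h)

lemma exists_forall_mem_of_notMem_closedNbhdColorSet {c : H.edgeSet → ℕ}
    (hc : IsProperColoring (KG H) c) {e : H.edgeSet} {κ : ℕ}
    (hκ : κ ∉ closedNbhdColorSet (KG H) c e) :
    ∃ u, ∀ g : H.edgeSet, c g = κ → u ∈ (g : Sym2 V) := by
  set S := Subtype.val '' (c ⁻¹' {κ})
  have heS : (e : Sym2 V) ∉ S := by
    rintro ⟨g, hg, hge⟩
    rw [Subtype.ext hge] at hg
    exact hκ (hg ▸ apply_mem_closedNbhdColorSet e)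
  have hS : ∀ x ∈ S, ∀ y ∈ S, ∃ v ∈ x, v ∈ y := by
    rintro _ ⟨g, hg, rfl⟩ _ ⟨g', hg', rfl⟩
    exact exists_mem_mem_of_not_adj fun h => hc h (hg.trans hg'.symm)
  have he : ∀ x ∈ S, ∃ v ∈ (e : Sym2 V), v ∈ x := by
    rintro _ ⟨g, hg, rfl⟩
    exact exists_mem_mem_of_not_adj fun h => hκ (hg ▸ h.apply_mem_closedNbhdColorSet)
  obtain ⟨u, hu⟩ := Sym2.exists_forall_mem_of_pairwise_meet heS hS he
  exact ⟨u, fun g hg => hu g ⟨g, hg, rfl⟩⟩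

lemma closedNbhdColors_deleteIncidenceSet_le [Finite V] {c : H.edgeSet → ℕ} {t κ : ℕ} {u : V}
    (hb : ∀ e, closedNbhdColors (KG H) c e ≤ t + 1)
    (hstar : ∀ g : H.edgeSet, c g = κ → u ∈ (g : Sym2 V))
    (hadj : ∀ μ ∈ Set.range c, μ ≠ κ → ∃ e₁ e₂, c e₁ = κ ∧ c e₂ = μ ∧ (KG H).Adj e₁ e₂)
    (f : (H.deleteIncidenceSet u).edgeSet) :
    closedNbhdColors (KG (H.deleteIncidenceSet u))
      (c ∘ homOfLE (H.deleteIncidenceSet_le u)) f ≤ t := by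
  set φ := homOfLE (H.deleteIncidenceSet_le u)
  set A' := closedNbhdColorSet (KG (H.deleteIncidenceSet u)) (c ∘ φ) f
  have hu : ∀ g, u ∉ ((φ g : H.edgeSet) : Sym2 V) := fun g =>
    (SimpleGraph.mem_edgeSet_deleteIncidenceSet.mp g.2).2
  have hκ : κ ∉ A' := by
    rintro ⟨g, -, hg⟩
    exact hu g (hstar _ hg)
  obtain ⟨e₁, e₂, he₁, he₂, h₁₂⟩ :=
    hadj (c (φ f)) ⟨_, rfl⟩ fun h => hκ (h ▸ apply_mem_closedNbhdColorSet f)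
  -- If `e₁` is disjoint from `f`, the neighborhood of `f` sees `κ` too. Otherwise `e₁ = uw` with
  -- `w ∈ f`, so `e₁` is disjoint from every edge avoiding `u` and `f`, and `e₂` has `f`'s color.
  obtain ⟨e, he⟩ : ∃ e, insert κ A' ⊆ closedNbhdColorSet (KG H) c e := by
    by_cases hfe₁ : (KG H).Adj (φ f) e₁
    · exact ⟨φ f, Set.insert_subset (he₁ ▸ hfe₁.apply_mem_closedNbhdColorSet)
        (closedNbhdColorSet_comp_hom_subset φ f)⟩
    refine ⟨e₁, Set.insert_subset (he₁ ▸ apply_mem_closedNbhdColorSet e₁) ?_⟩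
    obtain ⟨w, hwf, hwe₁⟩ := exists_mem_mem_of_not_adj hfe₁
    have he₁uw : (e₁ : Sym2 V) = s(u, w) :=
      (Sym2.mem_and_mem_iff (ne_of_mem_of_not_mem hwf (hu f)).symm).mp ⟨hstar e₁ he₁, hwe₁⟩
    rintro _ ⟨g, rfl | hfg, rfl⟩
    · rw [Function.comp_apply, ← he₂]
      exact h₁₂.apply_mem_closedNbhdColorSet
    refine (adj_iff.mpr ?_).apply_mem_closedNbhdColorSet
    rw [he₁uw]
    intro v hv
    rcases Sym2.mem_iff.mp hv with rfl | rfl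
    exacts [hu g, hfg.2 v hwf]
  calc A'.ncard = (insert κ A').ncard - 1 := by
        rw [Set.ncard_insert_of_notMem hκ (closedNbhdColorSet_finite f), Nat.add_sub_cancel]
    _ ≤ closedNbhdColors (KG H) c e - 1 :=
        Nat.sub_le_sub_right (Set.ncard_le_ncard he (closedNbhdColorSet_finite e)) 1
    _ ≤ t := Nat.sub_le_of_le_add (hb e)

theorem colorable_of_closedNbhdColors_le [Finite V] {t : ℕ} {c : H.edgeSet → ℕ}
    (hc : IsProperColoring (KG H) c) (hb : ∀ e, closedNbhdColors (KG H) c e ≤ t) :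
    (KG H).Colorable t := by
  induction t generalizing H with
  | zero =>
    exact SimpleGraph.colorable_zero_iff.mpr
      ⟨fun e => (closedNbhdColors_pos e).ne' (Nat.le_zero.mp (hb e))⟩
  | succ t iht =>
  induction hn : (Set.range c).ncard using Nat.strong_induction_on generalizing c with
  | _ n ihn =>
  by_cases hsmall : n ≤ t + 1
  · exact hc.colorable.mono (hn ▸ hsmall)
  by_cases hmerge : ∃ a ∈ Set.range c, ∃ b ∈ Set.range c, a ≠ b ∧
      ∀ e f, c e = a → c f = b → ¬ (KG H).Adj e f
  · obtain ⟨a, ha, b, hb', hab, hno⟩ := hmerge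
    exact ihn _ (hn ▸ ncard_range_merge_lt ha hb' hab) (hc.merge hno)
      (fun e => (closedNbhdColors_comp_le _ e).trans (hb e)) rfl
  push Not at hmerge
  obtain ⟨e, κ, hκc, hκ⟩ := exists_notMem_closedNbhdColorSet hb (by omega)
  obtain ⟨u, hu⟩ := exists_forall_mem_of_notMem_closedNbhdColorSet hc hκ
  exact colorable_succ_of_deleteIncidenceSet u <| iht (hc.comp_hom _) <|
    closedNbhdColors_deleteIncidenceSet_le hb hu fun μ hμ hne => hmerge κ hκc μ hμ hne.symm

end KG

theorem localChromNum_KG_eq_chromNum_general {V : Type*} [Fintype V] (H : SimpleGraph V) :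
    localChromNum (KG H) = chromNum (KG H) := by
  refine le_antisymm (localChromNum_le_of_colorable (colorable_chromNum _)) ?_
  obtain ⟨c, hc, hb⟩ := exists_closedNbhdColors_le_localChromNum (KG H)
  exact Nat.sInf_le (KG.colorable_of_closedNbhdColors_le hc hb)

/-- For the complement of a line graph, the local chromatic number equals
the chromatic number. -/
theorem localChromNum_KG_eq_chromNum {V : Type*} [Fintype V] (H : SimpleGraph V)
    (hE : H.edgeSet.Nonempty) :
    localChromNum (KG H) = chromNum (KG H) :=
  localChromNum_KG_eq_chromNum_general H
end

section
/- Let H be a finite simple graph that is not a complete graph, has no induced subgraph isomorphic to the co-claw (the disjoint union of a triangle and one vertex), and has no induced subgraph isomorphic to the butterfly (two triangles sharing exactly one vertex, with no other edges). If G = KG(H) is the complement of the line graph of H, then χ(G) = τ(H). -/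
/-!
The colour classes of `KG H` are pairwise intersecting sets of edges, that is, stars and
triangles. A vertex cover colours the edges by stars, and a colouring by stars yields the vertex
cover of their centres, so it suffices to get rid of triangle classes without adding colours.
A triangle class `abc` merges with another class into two stars when that class is a star at a
corner or a triangle sharing a side. If it is a triangle `apq` sharing only the corner `a`,
butterfly-freeness gives an edge such as `pb`, and `abc`, `apq` and the class of `pb` are covered
by the stars at `a`, `b`, `p`. When none of this applies, each vertex `x` off the triangle has, by
co-claw-freeness, a neighbour `t` on it, and the class of `xt` must be a star centred at `x`. These
stars are distinct and differ from the triangle, so there are at least `|V| - 2 ≥ τ(H)` colours.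
-/

open SimpleGraph

/-- A vertex cover: a set of vertices meeting every edge. -/
def IsVertexCover {V : Type*} (H : SimpleGraph V) (S : Set V) : Prop :=
  ∀ ⦃u v⦄, H.Adj u v → u ∈ S ∨ v ∈ S

/-- The vertex cover number. -/
noncomputable def tauN {V : Type*} (H : SimpleGraph V) : ℕ :=
  sInf {n | ∃ S : Set V, _root_.IsVertexCover H S ∧ S.ncard = n}

/-- `H` has an induced co-claw: four vertices spanning exactly a triangle plus an
isolated vertex. -/
def HasInducedCoClaw {V : Type*} (H : SimpleGraph V) : Prop :=
  ∃ a b c d : V, d ≠ a ∧ d ≠ b ∧ d ≠ c ∧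
    H.Adj a b ∧ H.Adj b c ∧ H.Adj a c ∧ ¬ H.Adj d a ∧ ¬ H.Adj d b ∧ ¬ H.Adj d c

/-- `H` has an induced butterfly: five vertices spanning exactly two triangles sharing
exactly one vertex `x`. -/
def HasInducedButterfly {V : Type*} (H : SimpleGraph V) : Prop :=
  ∃ x a b d e : V, a ≠ d ∧ a ≠ e ∧ b ≠ d ∧ b ≠ e ∧
    H.Adj x a ∧ H.Adj x b ∧ H.Adj a b ∧
    H.Adj x d ∧ H.Adj x e ∧ H.Adj d e ∧
    ¬ H.Adj a d ∧ ¬ H.Adj a e ∧ ¬ H.Adj b d ∧ ¬ H.Adj b e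

section

variable {V ι : Type*}

def IsStar (S : Set (Sym2 V)) : Prop := ∃ x, ∀ e ∈ S, x ∈ e

def IsIntersecting (S : Set (Sym2 V)) : Prop := ∀ e ∈ S, ∀ f ∈ S, ∃ v, v ∈ e ∧ v ∈ f

def triangleEdges (a b c : V) : Set (Sym2 V) := {s(a, b), s(a, c), s(b, c)}

lemma IsStar.isIntersecting {S : Set (Sym2 V)} (h : IsStar S) : IsIntersecting S := by
  obtain ⟨x, hx⟩ := h
  exact fun e he f hf => ⟨x, hx e he, hx f hf⟩

lemma IsIntersecting.mem_or_mem {S : Set (Sym2 V)} (hS : IsIntersecting S) {u v : V}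
    (huv : s(u, v) ∈ S) {e : Sym2 V} (he : e ∈ S) : u ∈ e ∨ v ∈ e := by
  obtain ⟨w, hwe, hw⟩ := hS e he _ huv
  rcases Sym2.mem_iff.1 hw with rfl | rfl
  exacts [Or.inl hwe, Or.inr hwe]

section triangleEdges

variable {a b c : V}

@[simp]
lemma mem_triangleEdges {e : Sym2 V} :
    e ∈ triangleEdges a b c ↔ e = s(a, b) ∨ e = s(a, c) ∨ e = s(b, c) := Iff.rfl

lemma triangleEdges_left_comm (a b c : V) : triangleEdges a b c = triangleEdges b a c := by
  ext e
  simp only [mem_triangleEdges, Sym2.eq_swap (a := b) (b := a)]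
  tauto

lemma triangleEdges_right_comm (a b c : V) : triangleEdges a b c = triangleEdges a c b := by
  ext e
  simp only [mem_triangleEdges, Sym2.eq_swap (a := c) (b := b)]
  tauto

lemma eq_or_eq_or_eq_of_mem_triangleEdges {e : Sym2 V} {v : V} (he : e ∈ triangleEdges a b c)
    (hv : v ∈ e) : v = a ∨ v = b ∨ v = c := by
  rcases he with rfl | rfl | rfl <;> simp only [Sym2.mem_iff] at hv <;> tauto

lemma mem_or_mem_of_mem_triangleEdges {e : Sym2 V} (he : e ∈ triangleEdges a b c) :
    a ∈ e ∨ b ∈ e := by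
  rcases he with rfl | rfl | rfl <;> simp

lemma not_isStar_triangleEdges (hab : a ≠ b) (hac : a ≠ c) (hbc : b ≠ c) :
    ¬ IsStar (triangleEdges a b c) := by
  rintro ⟨x, hx⟩
  have h₁ := hx s(a, b) (by simp)
  have h₂ := hx s(a, c) (by simp)
  have h₃ := hx s(b, c) (by simp)
  simp only [Sym2.mem_iff] at h₁ h₂ h₃
  rcases h₁ with rfl | rfl <;> rcases h₂ with h₂ | h₂ <;> rcases h₃ with h₃ | h₃ <;> tauto

lemma exists_triangleEdges_eq_of_mem {x y : V} (h : s(x, y) ∈ triangleEdges a b c) :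
    ∃ w, triangleEdges a b c = triangleEdges x y w := by
  have l := triangleEdges_left_comm (V := V)
  have r := triangleEdges_right_comm (V := V)
  simp only [mem_triangleEdges, Sym2.eq_iff] at h
  rcases h with (⟨hx, hy⟩ | ⟨hx, hy⟩) | (⟨hx, hy⟩ | ⟨hx, hy⟩) | (⟨hx, hy⟩ | ⟨hx, hy⟩)
  all_goals rw [hx, hy]; first
    | exact ⟨_, rfl⟩ | exact ⟨_, l _ _ _⟩ | exact ⟨_, r _ _ _⟩
    | exact ⟨_, (l _ _ _).trans (r _ _ _)⟩ | exact ⟨_, (r _ _ _).trans (l _ _ _)⟩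
    | exact ⟨_, ((l _ _ _).trans (r _ _ _)).trans (l _ _ _)⟩

end triangleEdges

lemma exists_triangleEdges_of_not_isStar [Nonempty V] {H : SimpleGraph V} {S : Set (Sym2 V)}
    (hSH : S ⊆ H.edgeSet) (hS : IsIntersecting S) (hns : ¬ IsStar S) :
    ∃ a b c, H.Adj a b ∧ H.Adj a c ∧ H.Adj b c ∧ S = triangleEdges a b c := by
  simp only [IsStar, not_exists, not_forall, exists_prop] at hns
  obtain ⟨e₁, he₁, -⟩ := hns (Classical.arbitrary V)
  induction e₁ using Sym2.inductionOn with | _ a b => ?_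
  have hab : H.Adj a b := hSH he₁
  obtain ⟨e₂, he₂, ha₂⟩ := hns a
  obtain ⟨c, rfl⟩ := Sym2.mem_iff_exists.1 ((hS.mem_or_mem he₁ he₂).resolve_left ha₂)
  have hbc : H.Adj b c := hSH he₂
  have hac : a ≠ c := fun h => ha₂ (h ▸ Sym2.mem_mk_right b c)
  obtain ⟨e₃, he₃, hb₃⟩ := hns b
  obtain rfl : e₃ = s(a, c) := (Sym2.mem_and_mem_iff hac).1
    ⟨(hS.mem_or_mem he₁ he₃).resolve_right hb₃, (hS.mem_or_mem he₂ he₃).resolve_left hb₃⟩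
  refine ⟨a, b, c, hab, hSH he₃, hbc, Set.Subset.antisymm (fun e he => ?_) ?_⟩
  · -- `e` meets all three sides, so it contains two of the three vertices
    rcases hS.mem_or_mem he₁ he with ha | hb
    · rcases hS.mem_or_mem he₂ he with hb | hc
      · exact Or.inl ((Sym2.mem_and_mem_iff hab.ne).1 ⟨ha, hb⟩)
      · exact Or.inr (Or.inl ((Sym2.mem_and_mem_iff hac).1 ⟨ha, hc⟩))
    · rcases hS.mem_or_mem he₃ he with ha | hc
      · exact Or.inl ((Sym2.mem_and_mem_iff hab.ne).1 ⟨ha, hb⟩)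
      · exact Or.inr (Or.inr ((Sym2.mem_and_mem_iff hbc.ne).1 ⟨hb, hc⟩))
  · rintro e (rfl | rfl | rfl) <;> assumption

/-- The colour classes of a colouring of `KG H`, except that classes may overlap, so that they
can be replaced independently of each other. -/
structure IntersectingCover (H : SimpleGraph V) (ι : Type*) where
  cls : ι → Set (Sym2 V)
  cls_subset : ∀ i, cls i ⊆ H.edgeSet
  isIntersecting_cls : ∀ i, IsIntersecting (cls i)
  exists_mem_cls : ∀ e ∈ H.edgeSet, ∃ i, e ∈ cls i

lemma tauN_le_ncard {H : SimpleGraph V} {S : Set V} (hS : _root_.IsVertexCover H S) :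
    tauN H ≤ S.ncard :=
  Nat.sInf_le ⟨S, hS, rfl⟩

lemma tauN_le_card_sub_two [Finite V] {H : SimpleGraph V} {u v : V} (huv : u ≠ v)
    (hnadj : ¬ H.Adj u v) : tauN H ≤ Nat.card V - 2 := by
  have hS : _root_.IsVertexCover H {u, v}ᶜ := by
    intro p r hpr
    by_contra! h
    simp only [Set.mem_compl_iff, Set.mem_insert_iff, Set.mem_singleton_iff, not_not] at h
    obtain ⟨hp | hp, hr | hr⟩ := h <;> subst hp hr
    exacts [hpr.ne rfl, hnadj hpr, hnadj hpr.symm, hpr.ne rfl]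
  calc tauN H ≤ ({u, v}ᶜ : Set V).ncard := tauN_le_ncard hS
    _ = Nat.card V - 2 := by rw [Set.ncard_compl, Set.ncard_pair huv]

namespace IntersectingCover

variable {H : SimpleGraph V} (F : IntersectingCover H ι)

noncomputable def numNonStar : ℕ := {i | ¬ IsStar (F.cls i)}.ncard

def Improvable : Prop := ∃ F' : IntersectingCover H ι, F'.numNonStar < F.numNonStar

open Classical in
noncomputable def recenter (M : Set ι) (x : ι → V)
    (hM : ∀ i ∈ M, ∀ e ∈ F.cls i, ∃ j ∈ M, x j ∈ e) : IntersectingCover H ι where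
  cls i := if i ∈ M then {e | (∃ j ∈ M, e ∈ F.cls j) ∧ x i ∈ e} else F.cls i
  cls_subset i := by
    split_ifs
    · rintro e ⟨⟨j, -, he⟩, -⟩
      exact F.cls_subset j he
    · exact F.cls_subset i
  isIntersecting_cls i := by
    split_ifs
    · exact IsStar.isIntersecting ⟨x i, fun e he => he.2⟩
    · exact F.isIntersecting_cls i
  exists_mem_cls e he := by
    obtain ⟨i, hi⟩ := F.exists_mem_cls e he
    by_cases hiM : i ∈ M
    · obtain ⟨j, hjM, hj⟩ := hM i hiM e hi
      exact ⟨j, by simpa only [if_pos hjM] using ⟨⟨i, hiM, hi⟩, hj⟩⟩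
    · exact ⟨i, by simpa only [if_neg hiM] using hi⟩

def ofColoring (C : (KG H).Coloring ι) : IntersectingCover H ι where
  cls i := {e | ∃ he : e ∈ H.edgeSet, C ⟨e, he⟩ = i}
  cls_subset _ _ := fun ⟨he, _⟩ => he
  isIntersecting_cls i := by
    rintro e ⟨he, rfl⟩ f ⟨hf, hcf⟩
    by_contra! hdisj
    have hne : (⟨e, he⟩ : H.edgeSet) ≠ ⟨f, hf⟩ := by
      rintro ⟨⟩
      exact hdisj _ e.out_fst_mem e.out_fst_mem
    exact C.valid ⟨hne, hdisj⟩ hcf.symm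
  exists_mem_cls e he := ⟨C ⟨e, he⟩, he, rfl⟩

section triangleClass

variable {i₀ k : ι} {a b c : V}

lemma adj_of_cls_eq_triangleEdges (hT : F.cls i₀ = triangleEdges a b c) :
    H.Adj a b ∧ H.Adj a c ∧ H.Adj b c := by
  have h {u v : V} (huv : s(u, v) ∈ triangleEdges a b c) : H.Adj u v := F.cls_subset i₀ (hT ▸ huv)
  exact ⟨h (by simp), h (by simp), h (by simp)⟩

lemma not_isStar_of_cls_eq_triangleEdges (hT : F.cls i₀ = triangleEdges a b c) :
    ¬ IsStar (F.cls i₀) := by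
  obtain ⟨hab, hac, hbc⟩ := F.adj_of_cls_eq_triangleEdges hT
  exact hT ▸ not_isStar_triangleEdges hab.ne hac.ne hbc.ne

lemma ne_of_cls_eq_triangleEdges (hT : F.cls i₀ = triangleEdges a b c) {x y : V}
    (hx : x ∉ ({a, b, c} : Set V)) (hk : s(x, y) ∈ F.cls k) : k ≠ i₀ := by
  rintro rfl
  exact hx (eq_or_eq_or_eq_of_mem_triangleEdges (hT ▸ hk) (Sym2.mem_mk_left x y))

end triangleClass

variable [Finite ι]

lemma tauN_le_card_of_forall_isStar (hF : ∀ i, IsStar (F.cls i)) :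
    tauN H ≤ Nat.card ι := by
  choose x hx using hF
  have hS : _root_.IsVertexCover H (Set.range x) := by
    intro u v huv
    obtain ⟨i, hi⟩ := F.exists_mem_cls s(u, v) huv
    rcases Sym2.mem_iff.1 (hx i _ hi) with h | h
    exacts [Or.inl ⟨i, h⟩, Or.inr ⟨i, h⟩]
  calc tauN H ≤ (Set.range x).ncard := tauN_le_ncard hS
    _ ≤ Nat.card ι := by rw [← Nat.card_coe_set_eq]; exact Finite.card_range_le x

lemma improvable_of_recenter {M : Set ι} {i₀ : ι} (hi₀ : i₀ ∈ M)
    (h₀ : ¬ IsStar (F.cls i₀)) (x : ι → V) (hM : ∀ i ∈ M, ∀ e ∈ F.cls i, ∃ j ∈ M, x j ∈ e) :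
    F.Improvable := by
  classical
  have hstar : ∀ i ∈ M, IsStar ((F.recenter M x hM).cls i) := fun i hi =>
    ⟨x i, fun e he => by simp only [recenter, if_pos hi] at he; exact he.2⟩
  refine ⟨F.recenter M x hM, Set.ncard_lt_ncard ?_⟩
  have hsub : {i | ¬ IsStar ((F.recenter M x hM).cls i)} ⊆ {i | ¬ IsStar (F.cls i)} := by
    intro i (hi : ¬ IsStar _)
    by_cases hiM : i ∈ M
    · exact absurd (hstar i hiM) hi
    · show ¬ IsStar (F.cls i)
      simpa only [recenter, if_neg hiM] using hi
  exact (Set.ssubset_iff_of_subset hsub).2 ⟨i₀, h₀, fun h => h (hstar i₀ hi₀)⟩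

lemma improvable_of_two {i₀ k : ι} (hki : k ≠ i₀) (h₀ : ¬ IsStar (F.cls i₀)) {α β : V}
    (hi₀ : ∀ e ∈ F.cls i₀, α ∈ e ∨ β ∈ e) (hk : ∀ e ∈ F.cls k, α ∈ e ∨ β ∈ e) :
    F.Improvable := by
  classical
  let x : ι → V := fun i => if i = i₀ then α else β
  have hcov : ∀ e : Sym2 V, α ∈ e ∨ β ∈ e → ∃ j ∈ ({i₀, k} : Set ι), x j ∈ e := by
    rintro e (h | h)
    exacts [⟨i₀, by simp, by simpa [x]⟩, ⟨k, by simp, by simpa [x, hki]⟩]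
  refine F.improvable_of_recenter (M := {i₀, k}) (by simp) h₀ x ?_
  rintro i (rfl | rfl) e he
  exacts [hcov e (hi₀ e he), hcov e (hk e he)]

lemma improvable_of_three {i₀ k l : ι} (hki : k ≠ i₀) (hli : l ≠ i₀) (hlk : l ≠ k)
    (h₀ : ¬ IsStar (F.cls i₀)) {α β γ : V} (hi₀ : ∀ e ∈ F.cls i₀, α ∈ e ∨ β ∈ e ∨ γ ∈ e)
    (hk : ∀ e ∈ F.cls k, α ∈ e ∨ β ∈ e ∨ γ ∈ e) (hl : ∀ e ∈ F.cls l, α ∈ e ∨ β ∈ e ∨ γ ∈ e) :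
    F.Improvable := by
  classical
  let x : ι → V := fun i => if i = i₀ then α else if i = k then β else γ
  have hcov : ∀ e : Sym2 V, α ∈ e ∨ β ∈ e ∨ γ ∈ e → ∃ j ∈ ({i₀, k, l} : Set ι), x j ∈ e := by
    rintro e (h | h | h)
    exacts [⟨i₀, by simp, by simpa [x]⟩, ⟨k, by simp, by simpa [x, hki]⟩,
      ⟨l, by simp, by simpa [x, hli, hlk]⟩]
  refine F.improvable_of_recenter (M := {i₀, k, l}) (by simp) h₀ x ?_
  rintro i (rfl | rfl | rfl) e he
  exacts [hcov e (hi₀ e he), hcov e (hk e he), hcov e (hl e he)]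

variable {i₀ k : ι} {a b c : V}

lemma improvable_of_forall_mem_or_mem (hT : F.cls i₀ = triangleEdges a b c) (hk : k ≠ i₀)
    (hab : ∀ e ∈ F.cls k, a ∈ e ∨ b ∈ e) : F.Improvable :=
  F.improvable_of_two hk (F.not_isStar_of_cls_eq_triangleEdges hT)
    (fun _ he => mem_or_mem_of_mem_triangleEdges (hT ▸ he)) hab

lemma improvable_of_adj {p q : V} (hT : F.cls i₀ = triangleEdges a b c)
    (hk : F.cls k = triangleEdges a p q) (hp : p ∉ ({a, b, c} : Set V)) (hqb : q ≠ b)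
    (hpb : H.Adj p b) : F.Improvable := by
  obtain ⟨hab, -, -⟩ := F.adj_of_cls_eq_triangleEdges hT
  obtain ⟨l, hl⟩ := F.exists_mem_cls s(p, b) hpb
  have hki : k ≠ i₀ :=
    F.ne_of_cls_eq_triangleEdges hT hp (y := a) (by simp [hk, Sym2.eq_swap])
  have hli : l ≠ i₀ := F.ne_of_cls_eq_triangleEdges hT hp hl
  have hlk : l ≠ k := by
    rintro rfl
    rcases eq_or_eq_or_eq_of_mem_triangleEdges (hk ▸ hl) (Sym2.mem_mk_right p b) with h | h | h
    exacts [hab.ne h.symm, hpb.ne h.symm, hqb h.symm]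
  refine F.improvable_of_three hki hli hlk (F.not_isStar_of_cls_eq_triangleEdges hT)
    (α := a) (β := b) (γ := p) (fun e he => ?_) (fun e he => ?_) (fun e he => ?_)
  · have := mem_or_mem_of_mem_triangleEdges (hT ▸ he); tauto
  · have := mem_or_mem_of_mem_triangleEdges (hk ▸ he); tauto
  · have := (F.isIntersecting_cls l).mem_or_mem hl he; tauto

lemma improvable_of_cls_eq_triangleEdges (hbf : ¬ HasInducedButterfly H) {p q : V}
    (hT : F.cls i₀ = triangleEdges a b c) (hk : F.cls k = triangleEdges a p q)
    (hp : p ∉ ({a, b, c} : Set V)) (hq : q ∉ ({a, b, c} : Set V)) : F.Improvable := by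
  obtain ⟨hab, hac, hbc⟩ := F.adj_of_cls_eq_triangleEdges hT
  obtain ⟨hap, haq, hpq⟩ := F.adj_of_cls_eq_triangleEdges hk
  have hp' : p ≠ a ∧ p ≠ b ∧ p ≠ c := by simpa using hp
  have hq' : q ≠ a ∧ q ≠ b ∧ q ≠ c := by simpa using hq
  have hT' : F.cls i₀ = triangleEdges a c b := hT.trans (triangleEdges_right_comm a b c)
  have hk' : F.cls k = triangleEdges a q p := hk.trans (triangleEdges_right_comm a p q)
  have hpT : p ∉ ({a, c, b} : Set V) := by rwa [Set.pair_comm]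
  have hqT : q ∉ ({a, c, b} : Set V) := by rwa [Set.pair_comm]
  have hadj : H.Adj b p ∨ H.Adj b q ∨ H.Adj c p ∨ H.Adj c q := by
    by_contra! h
    exact hbf ⟨a, b, c, p, q, hp'.2.1.symm, hq'.2.1.symm, hp'.2.2.symm, hq'.2.2.symm,
      hab, hac, hbc, hap, haq, hpq, h.1, h.2.1, h.2.2.1, h.2.2.2⟩
  rcases hadj with h | h | h | h
  · exact F.improvable_of_adj hT hk hp hq'.2.1 h.symm
  · exact F.improvable_of_adj hT hk' hq hp'.2.1 h.symm
  · exact F.improvable_of_adj hT' hk hpT hq'.2.2 h.symm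
  · exact F.improvable_of_adj hT' hk' hqT hp'.2.2 h.symm

lemma mem_of_mem_cls_of_not_improvable (hbf : ¬ HasInducedButterfly H) (hF : ¬ F.Improvable)
    (hT : F.cls i₀ = triangleEdges a b c) {x : V} (hx : x ∉ ({a, b, c} : Set V))
    (hk : s(a, x) ∈ F.cls k) : ∀ e ∈ F.cls k, x ∈ e := by
  have : Nonempty V := ⟨a⟩
  have hki : k ≠ i₀ := F.ne_of_cls_eq_triangleEdges hT hx (y := a) (Sym2.eq_swap ▸ hk)
  -- the class of `ax` is a star at `x`, a star at `a` or a triangle `axw`; only the first one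
  -- does not make `F` improvable
  by_cases hstar : IsStar (F.cls k)
  · obtain ⟨z, hz⟩ := hstar
    rcases Sym2.mem_iff.1 (hz _ hk) with rfl | rfl
    · exact absurd (F.improvable_of_forall_mem_or_mem hT hki fun e he => Or.inl (hz e he)) hF
    · exact hz
  exfalso
  obtain ⟨_, _, _, -, -, -, hS⟩ := exists_triangleEdges_of_not_isStar (F.cls_subset k)
    (F.isIntersecting_cls k) hstar
  obtain ⟨w, hw⟩ := exists_triangleEdges_eq_of_mem (hS ▸ hk)
  rw [hw] at hS
  obtain ⟨-, haw, -⟩ := F.adj_of_cls_eq_triangleEdges hS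
  have hS' := hS.trans (triangleEdges_right_comm a x w)
  by_cases hwb : w = b
  · rw [hwb] at hS'
    exact hF (F.improvable_of_forall_mem_or_mem hT hki fun e he =>
      mem_or_mem_of_mem_triangleEdges (hS' ▸ he))
  by_cases hwc : w = c
  · rw [hwc] at hS'
    exact hF (F.improvable_of_forall_mem_or_mem (hT.trans (triangleEdges_right_comm a b c)) hki
      fun e he => mem_or_mem_of_mem_triangleEdges (hS' ▸ he))
  exact hF (F.improvable_of_cls_eq_triangleEdges hbf hT hS hx (by simp [haw.ne', hwb, hwc]))

lemma exists_cls_centred_at_of_not_improvable (hcc : ¬ HasInducedCoClaw H)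
    (hbf : ¬ HasInducedButterfly H) (hF : ¬ F.Improvable) (hT : F.cls i₀ = triangleEdges a b c)
    {x : V} (hx : x ∉ ({a, b, c} : Set V)) :
    ∃ k, k ≠ i₀ ∧ (∀ e ∈ F.cls k, x ∈ e) ∧ ∃ t ∈ ({a, b, c} : Set V), s(t, x) ∈ F.cls k := by
  obtain ⟨hab, hac, hbc⟩ := F.adj_of_cls_eq_triangleEdges hT
  obtain ⟨t, ht, htx⟩ : ∃ t ∈ ({a, b, c} : Set V), H.Adj t x := by
    by_contra! h
    simp only [Set.mem_insert_iff, Set.mem_singleton_iff, forall_eq_or_imp, forall_eq,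
      not_or] at h hx
    exact hcc ⟨a, b, c, x, hx.1, hx.2.1, hx.2.2, hab, hbc, hac,
      fun h' => h.1 h'.symm, fun h' => h.2.1 h'.symm, fun h' => h.2.2 h'.symm⟩
  obtain ⟨k, hk⟩ := F.exists_mem_cls s(t, x) htx
  refine ⟨k, F.ne_of_cls_eq_triangleEdges hT hx (y := t) (Sym2.eq_swap ▸ hk), ?_, t, ht, hk⟩
  rcases ht with rfl | rfl | rfl
  · exact F.mem_of_mem_cls_of_not_improvable hbf hF hT hx hk
  · exact F.mem_of_mem_cls_of_not_improvable hbf hF (hT.trans (triangleEdges_left_comm _ _ _))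
      (by rwa [Set.insert_comm]) hk
  · refine F.mem_of_mem_cls_of_not_improvable hbf hF
      (hT.trans ((triangleEdges_right_comm _ _ _).trans (triangleEdges_left_comm _ _ _)))
      (by simp only [Set.mem_insert_iff, Set.mem_singleton_iff] at hx ⊢; tauto) hk

lemma tauN_le_card_of_not_improvable [Finite V] (hnc : ∃ u v : V, u ≠ v ∧ ¬ H.Adj u v)
    (hcc : ¬ HasInducedCoClaw H) (hbf : ¬ HasInducedButterfly H) (hF : ¬ F.Improvable)
    (hT : F.cls i₀ = triangleEdges a b c) : tauN H ≤ Nat.card ι := by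
  obtain ⟨u, v, huv, hnadj⟩ := hnc
  have : Nonempty ι := ⟨i₀⟩
  choose! k hki hkx t ht hkt using fun x (hx : x ∉ ({a, b, c} : Set V)) =>
    F.exists_cls_centred_at_of_not_improvable hcc hbf hF hT hx
  have hinj : Set.InjOn k {a, b, c}ᶜ := by
    intro x hx y hy hxy
    rcases Sym2.mem_iff.1 (hkx y hy _ (hxy ▸ hkt x hx)) with h | h
    · exact absurd (h ▸ ht x hx) hy
    · exact h.symm
  have hcard : ({a, b, c}ᶜ : Set V).ncard ≤ ({i₀}ᶜ : Set ι).ncard :=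
    Set.ncard_le_ncard_of_injOn k hki hinj
  rw [Set.ncard_compl, Set.ncard_compl, Set.ncard_singleton] at hcard
  have hT3 : ({a, b, c} : Set V).ncard ≤ 3 :=
    (Set.ncard_insert_le a _).trans (by grw [Set.ncard_insert_le b _, Set.ncard_singleton])
  have hι : 0 < Nat.card ι := Nat.card_pos
  calc tauN H ≤ Nat.card V - 2 := tauN_le_card_sub_two huv hnadj
    _ ≤ Nat.card ι := by omega

theorem tauN_le_card [Finite V] (hnc : ∃ u v : V, u ≠ v ∧ ¬ H.Adj u v)
    (hcc : ¬ HasInducedCoClaw H) (hbf : ¬ HasInducedButterfly H) (F : IntersectingCover H ι) :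
    tauN H ≤ Nat.card ι := by
  have : Nonempty V := ⟨hnc.choose⟩
  induction hN : F.numNonStar using Nat.strong_induction_on generalizing F with
  | _ N ih =>
    by_cases hall : ∀ i, IsStar (F.cls i)
    · exact F.tauN_le_card_of_forall_isStar hall
    obtain ⟨i₀, hi₀⟩ := not_forall.1 hall
    obtain ⟨a, b, c, -, -, -, hT⟩ :=
      exists_triangleEdges_of_not_isStar (F.cls_subset i₀) (F.isIntersecting_cls i₀) hi₀
    by_cases hF : F.Improvable
    · obtain ⟨F', hlt⟩ := hF
      exact ih _ (hN ▸ hlt) F' rfl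
    · exact F.tauN_le_card_of_not_improvable hnc hcc hbf hF hT

end IntersectingCover

noncomputable def IsVertexCover.coloringKG {H : SimpleGraph V} {S : Set V}
    (hS : _root_.IsVertexCover H S) : (KG H).Coloring S :=
  have hmem (e : H.edgeSet) : ∃ x ∈ S, x ∈ (e : Sym2 V) := by
    obtain ⟨e, he⟩ := e
    induction e using Sym2.inductionOn with
    | _ u v => exact (hS he).elim (fun hu => ⟨u, hu, by simp⟩) (fun hv => ⟨v, hv, by simp⟩)
  Coloring.mk (fun e => ⟨(hmem e).choose, (hmem e).choose_spec.1⟩) fun {e f} hef hcol => by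
    have h : (hmem e).choose = (hmem f).choose := congrArg Subtype.val hcol
    exact hef.2 _ (hmem e).choose_spec.2 (h ▸ (hmem f).choose_spec.2)

lemma chromNum_KG_le_tauN [Finite V] (H : SimpleGraph V) : chromNum (KG H) ≤ tauN H := by
  obtain ⟨S, hS, hSτ⟩ : ∃ S : Set V, _root_.IsVertexCover H S ∧ S.ncard = tauN H :=
    Nat.sInf_mem (s := {n | ∃ S : Set V, _root_.IsVertexCover H S ∧ S.ncard = n})
      ⟨_, Set.univ, fun _ _ _ => Or.inl trivial, rfl⟩
  have : Fintype S := Fintype.ofFinite S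
  rw [← hSτ, ← Nat.card_coe_set_eq, Nat.card_eq_fintype_card]
  exact Nat.sInf_le hS.coloringKG.colorable

lemma tauN_le_chromNum_KG [Finite V] {H : SimpleGraph V} (hnc : ∃ u v : V, u ≠ v ∧ ¬ H.Adj u v)
    (hcc : ¬ HasInducedCoClaw H) (hbf : ¬ HasInducedButterfly H) : tauN H ≤ chromNum (KG H) := by
  have : Fintype H.edgeSet := Fintype.ofFinite _
  obtain ⟨C⟩ : (KG H).Colorable (chromNum (KG H)) :=
    Nat.sInf_mem (s := {n | (KG H).Colorable n}) ⟨_, (KG H).colorable_of_fintype⟩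
  simpa using (IntersectingCover.ofColoring C).tauN_le_card hnc hcc hbf

end

/-- If `H` is not complete, has no induced co-claw and no induced butterfly, then the
chromatic number of the complement of its line graph equals its vertex cover number. -/
theorem chromNum_KG_eq_tau {V : Type*} [Fintype V] (H : SimpleGraph V)
    (hnc : ∃ u v : V, u ≠ v ∧ ¬ H.Adj u v)
    (hcc : ¬ HasInducedCoClaw H) (hbf : ¬ HasInducedButterfly H) :
    chromNum (KG H) = tauN H :=
  (chromNum_KG_le_tauN H).antisymm (tauN_le_chromNum_KG hnc hcc hbf)
end

section
/- Let H be a finite simple graph with at least one edge, let G = KG(H) be the complement of the line graph of H, and let M be any inclusionwise maximal matching of H with |M| = k. Then k ≤ χ(G) ≤ 2k. (In particular, the size of a maximal matching yields a 2-approximation of χ(G).) -/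
/-!
The edges of a matching are pairwise disjoint, so they form a clique in `KG H` and need distinct
colors. Conversely, maximality makes the at most `2k` vertices covered by `M` a vertex cover of
`H`; coloring each edge by one of its endpoints in that cover is proper, because edges that share
their color share a vertex and hence are not adjacent in `KG H`.
-/

open SimpleGraph

/-- A matching of `H`: a set of pairwise disjoint edges of `H`. -/
def IsMatchingSet {V : Type*} (H : SimpleGraph V) (M : Set (Sym2 V)) : Prop :=
  M ⊆ H.edgeSet ∧ ∀ e ∈ M, ∀ f ∈ M, e ≠ f → ∀ v, v ∈ e → v ∉ f

/-- An inclusionwise maximal matching: no edge of `H` can be added keeping the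
edges pairwise disjoint. -/
def IsMaximalMatchingSet {V : Type*} (H : SimpleGraph V) (M : Set (Sym2 V)) : Prop :=
  IsMatchingSet H M ∧ ∀ e ∈ H.edgeSet, e ∉ M → ∃ f ∈ M, ∃ v, v ∈ e ∧ v ∈ f

namespace SimpleGraph

variable {α : Type*} {G : SimpleGraph α} {s : Set α} {n : ℕ}

theorem IsClique.finite_of_colorable (h : G.IsClique s) (hc : G.Colorable n) : s.Finite := by
  obtain ⟨C⟩ := hc
  have hinj := C.injective_comp_of_pairwise_adj (Subtype.val : s → α)
    fun x y hxy => h x.2 y.2 (Subtype.val_injective.ne hxy)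
  exact Set.finite_coe_iff.mp (Finite.of_injective _ hinj)

theorem IsClique.ncard_le_of_colorable (h : G.IsClique s) (hc : G.Colorable n) :
    s.ncard ≤ n := by
  rw [← Nat.card_coe_set_eq]
  exact hc.card_le_of_pairwise_adj (Subtype.val : s → α)
    fun x y hxy => h x.2 y.2 (Subtype.val_injective.ne hxy)

end SimpleGraph

namespace Sym2

variable {α : Type*}

theorem coe_toFinset [DecidableEq α] (z : Sym2 α) : (z.toFinset : Set α) = {v | v ∈ z} := by
  ext; simp

theorem finite_setOf_mem (z : Sym2 α) : {v | v ∈ z}.Finite := by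
  classical
  exact z.coe_toFinset ▸ z.toFinset.finite_toSet

theorem ncard_setOf_mem_le_two (z : Sym2 α) : {v | v ∈ z}.ncard ≤ 2 := by
  classical
  rw [← z.coe_toFinset, Set.ncard_coe_finset, card_toFinset]
  split_ifs <;> omega

end Sym2

section Matchings

variable {V : Type*} {H : SimpleGraph V} {M : Set (Sym2 V)}

def coveredVertices (M : Set (Sym2 V)) : Set V := ⋃ f ∈ M, {v | v ∈ f}

theorem Set.Finite.coveredVertices (hM : M.Finite) : (coveredVertices M).Finite :=
  hM.biUnion fun f _ => f.finite_setOf_mem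

theorem ncard_coveredVertices_le (hM : M.Finite) :
    (coveredVertices M).ncard ≤ 2 * M.ncard := by
  classical
  have hcov : coveredVertices M = ⋃ f ∈ hM.toFinset, {v | v ∈ f} := by
    simp only [coveredVertices, Set.Finite.mem_toFinset]
  calc (coveredVertices M).ncard ≤ ∑ f ∈ hM.toFinset, {v | v ∈ f}.ncard :=
        hcov ▸ Finset.set_ncard_biUnion_le _ _
    _ ≤ ∑ _f ∈ hM.toFinset, 2 := Finset.sum_le_sum fun f _ => f.ncard_setOf_mem_le_two
    _ = 2 * M.ncard := by
      rw [Finset.sum_const, smul_eq_mul, Set.ncard_eq_toFinset_card M hM, mul_comm]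

noncomputable def coloringOfVertexCover (S : Set V) (hS : ∀ e ∈ H.edgeSet, ∃ v ∈ e, v ∈ S) :
    (KG H).Coloring S :=
  Coloring.mk (fun e => ⟨(hS e e.2).choose, (hS e e.2).choose_spec.2⟩) fun {e f} hef heq => by
    have hpick : (hS e e.2).choose = (hS f f.2).choose := congrArg Subtype.val heq
    exact hef.2 _ (hS e e.2).choose_spec.1 (hpick ▸ (hS f f.2).choose_spec.1)

theorem colorable_KG_of_vertexCover {S : Set V} (hfin : S.Finite)
    (hS : ∀ e ∈ H.edgeSet, ∃ v ∈ e, v ∈ S) : (KG H).Colorable S.ncard := by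
  have := hfin.fintype
  rw [Set.ncard_eq_toFinset_card', Set.toFinset_card]
  exact (coloringOfVertexCover S hS).colorable

theorem IsMatchingSet.isClique_KG (hM : IsMatchingSet H M) :
    (KG H).IsClique (Subtype.val ⁻¹' M) := fun e he f hf hef =>
  ⟨hef, hM.2 e he f hf (Subtype.val_injective.ne hef)⟩

theorem IsMatchingSet.subset_range_val (hM : IsMatchingSet H M) :
    M ⊆ Set.range (Subtype.val : H.edgeSet → Sym2 V) := by
  rw [Subtype.range_coe]
  exact hM.1

theorem IsMatchingSet.finite_of_colorable (hM : IsMatchingSet H M) {n : ℕ}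
    (hc : (KG H).Colorable n) : M.Finite :=
  Set.finite_of_finite_preimage (hM.isClique_KG.finite_of_colorable hc) hM.subset_range_val

theorem IsMatchingSet.ncard_le_of_colorable (hM : IsMatchingSet H M) {n : ℕ}
    (hc : (KG H).Colorable n) : M.ncard ≤ n := by
  rw [← Set.ncard_preimage_of_injective_subset_range Subtype.val_injective
    hM.subset_range_val]
  exact hM.isClique_KG.ncard_le_of_colorable hc

theorem IsMaximalMatchingSet.isVertexCover (hM : IsMaximalMatchingSet H M) :
    ∀ e ∈ H.edgeSet, ∃ v ∈ e, v ∈ coveredVertices M := by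
  intro e he
  by_cases heM : e ∈ M
  · exact ⟨e.out.1, e.out_fst_mem, Set.mem_biUnion heM e.out_fst_mem⟩
  · obtain ⟨f, hf, v, hve, hvf⟩ := hM.2 e he heM
    exact ⟨v, hve, Set.mem_biUnion hf hvf⟩

end Matchings

theorem maximal_matching_two_approx_general {V : Type*} (H : SimpleGraph V)
    (M : Set (Sym2 V)) (hM : IsMaximalMatchingSet H M)
    (k : ℕ) (hk : M.ncard = k) :
    k ≤ chromNum (KG H) ∧ chromNum (KG H) ≤ 2 * k := by
  subst hk
  by_cases hfin : M.Finite
  · have hcol : (KG H).Colorable (2 * M.ncard) :=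
      (colorable_KG_of_vertexCover hfin.coveredVertices hM.isVertexCover).mono
        (ncard_coveredVertices_le hfin)
    exact ⟨le_csInf ⟨_, hcol⟩ fun n hn => hM.1.ncard_le_of_colorable hn, Nat.sInf_le hcol⟩
  · -- An infinite matching is an infinite clique of `KG H`, so `chromNum (KG H) = sInf ∅ = 0`,
    -- and `M.ncard = 0` as well.
    have hnone : {n | (KG H).Colorable n} = ∅ :=
      Set.eq_empty_of_forall_notMem fun n hn => hfin (hM.1.finite_of_colorable hn)
    simp [chromNum, hnone, Set.Infinite.ncard hfin]

/-- The size of any inclusionwise maximal matching of `H` is a 2-approximation of the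
chromatic number of the complement of the line graph of `H`. -/
theorem maximal_matching_two_approx {V : Type*} [Fintype V] (H : SimpleGraph V)
    (hE : H.edgeSet.Nonempty) (M : Set (Sym2 V)) (hM : IsMaximalMatchingSet H M)
    (k : ℕ) (hk : M.ncard = k) :
    k ≤ chromNum (KG H) ∧ chromNum (KG H) ≤ 2 * k :=
  maximal_matching_two_approx_general H M hM k hk
end

section
/- Let 𝓗₁ and 𝓗₂ be finite hypergraphs on disjoint vertex sets and let 𝓗₁ * 𝓗₂ be their join. Then cd₂(𝓗₁ * 𝓗₂) = min( cd₂(𝓗₁) + v(𝓗₂), τ(𝓗₁) + τ(𝓗₂), v(𝓗₁) + cd₂(𝓗₂) ) and τ(𝓗₁ * 𝓗₂) = min( τ(𝓗₁) + v(𝓗₂), v(𝓗₁) + τ(𝓗₂) ). -/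
open SimpleGraph

/-- The vertex cover number of a hypergraph with vertex set `V` and edge family `E`:
the minimum size of a set of vertices meeting every edge. -/
noncomputable def hTau {V : Type*} (E : Set (Set V)) : ℕ :=
  sInf {n | ∃ C : Set V, C.ncard = n ∧ ∀ e ∈ E, (e ∩ C).Nonempty}

/-- The 2-colorability defect of a hypergraph with vertex set `V` and edge family `E`:
the minimum size of a vertex set `X` such that the remaining vertices admit a 2-coloring
with no edge disjoint from `X` monochromatic. -/
noncomputable def hCd2 {V : Type*} (E : Set (Set V)) : ℕ :=
  sInf {n | ∃ X : Set V, X.ncard = n ∧ ∃ c : V → Bool,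
    ∀ e ∈ E, (∀ x ∈ X, x ∉ e) → ∃ u ∈ e, ∃ v ∈ e, c u ≠ c v}

/-- The join of two hypergraphs on disjoint vertex sets: its edges are the edges of the
first, the edges of the second, and all 2-element sets with one vertex from each. -/
def hJoin {V₁ V₂ : Type*} (E₁ : Set (Set V₁)) (E₂ : Set (Set V₂)) :
    Set (Set (V₁ ⊕ V₂)) :=
  {s | (∃ e ∈ E₁, s = Sum.inl '' e) ∨ (∃ e ∈ E₂, s = Sum.inr '' e) ∨
    (∃ a b, s = {Sum.inl a, Sum.inr b})}

section Aux
variable {V₁ V₂ : Type*}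

lemma ncard_inl_union_inr [Finite V₁] [Finite V₂] (A : Set V₁) (B : Set V₂) :
    (Sum.inl '' A ∪ Sum.inr '' B : Set (V₁ ⊕ V₂)).ncard = A.ncard + B.ncard := by
  rw [Set.ncard_union_eq ?_ (Set.toFinite _) (Set.toFinite _),
    Set.ncard_image_of_injective _ Sum.inl_injective,
    Set.ncard_image_of_injective _ Sum.inr_injective]
  rw [Set.disjoint_left]
  rintro _ ⟨a, -, rfl⟩ ⟨b, -, h⟩
  simp at h

lemma ncard_sum_split [Finite V₁] [Finite V₂] (X : Set (V₁ ⊕ V₂)) :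
    X.ncard = (Sum.inl ⁻¹' X).ncard + (Sum.inr ⁻¹' X).ncard := by
  rw [← ncard_inl_union_inr]
  congr 1
  ext x
  cases x <;> simp

lemma bool_eq_of_ne {x y z : Bool} (h1 : x ≠ z) (h2 : y ≠ z) : x = y := by
  revert h1 h2; revert x y z; decide

end Aux

/-- The 2-colorability defect and the vertex cover number of the join of two hypergraphs
all of whose edges have at least 2 vertices. -/
theorem hCd2_hTau_hJoin {V₁ V₂ : Type*} [Fintype V₁] [Fintype V₂]
    (E₁ : Set (Set V₁)) (E₂ : Set (Set V₂))
    (h₁ : ∀ e ∈ E₁, 2 ≤ e.ncard) (h₂ : ∀ e ∈ E₂, 2 ≤ e.ncard) :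
    hCd2 (hJoin E₁ E₂) =
        min (hCd2 E₁ + Fintype.card V₂)
          (min (hTau E₁ + hTau E₂) (Fintype.card V₁ + hCd2 E₂)) ∧
      hTau (hJoin E₁ E₂) =
        min (hTau E₁ + Fintype.card V₂) (Fintype.card V₁ + hTau E₂) := by
  have hEne₁ : ∀ e ∈ E₁, e.Nonempty := fun e he =>
    Set.nonempty_of_ncard_ne_zero (by have := h₁ e he; omega)
  have hEne₂ : ∀ e ∈ E₂, e.Nonempty := fun e he =>
    Set.nonempty_of_ncard_ne_zero (by have := h₂ e he; omega)
  -- witnesses for the four invariants of the factors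
  obtain ⟨C₁, hC₁card, hC₁cov⟩ :
      ∃ C : Set V₁, C.ncard = hTau E₁ ∧ ∀ e ∈ E₁, (e ∩ C).Nonempty := by
    have : hTau E₁ ∈ {n | ∃ C : Set V₁, C.ncard = n ∧ ∀ e ∈ E₁, (e ∩ C).Nonempty} :=
      Nat.sInf_mem ⟨(Set.univ : Set V₁).ncard, Set.univ, rfl,
        fun e he => by simpa using hEne₁ e he⟩
    obtain ⟨C, h1, h2⟩ := this
    exact ⟨C, h1, h2⟩
  obtain ⟨C₂, hC₂card, hC₂cov⟩ :
      ∃ C : Set V₂, C.ncard = hTau E₂ ∧ ∀ e ∈ E₂, (e ∩ C).Nonempty := by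
    have : hTau E₂ ∈ {n | ∃ C : Set V₂, C.ncard = n ∧ ∀ e ∈ E₂, (e ∩ C).Nonempty} :=
      Nat.sInf_mem ⟨(Set.univ : Set V₂).ncard, Set.univ, rfl,
        fun e he => by simpa using hEne₂ e he⟩
    obtain ⟨C, h1, h2⟩ := this
    exact ⟨C, h1, h2⟩
  obtain ⟨X₁, hX₁card, c₁, hc₁⟩ :
      ∃ X : Set V₁, X.ncard = hCd2 E₁ ∧ ∃ c : V₁ → Bool,
        ∀ e ∈ E₁, (∀ x ∈ X, x ∉ e) → ∃ u ∈ e, ∃ v ∈ e, c u ≠ c v := by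
    have : hCd2 E₁ ∈ {n | ∃ X : Set V₁, X.ncard = n ∧ ∃ c : V₁ → Bool,
        ∀ e ∈ E₁, (∀ x ∈ X, x ∉ e) → ∃ u ∈ e, ∃ v ∈ e, c u ≠ c v} := by
      refine Nat.sInf_mem ⟨(Set.univ : Set V₁).ncard, Set.univ, rfl, fun _ => true,
        fun e he hdisj => ?_⟩
      obtain ⟨v, hv⟩ := hEne₁ e he
      exact absurd hv (hdisj v (Set.mem_univ v))
    obtain ⟨X, h1, h2⟩ := this
    exact ⟨X, h1, h2⟩
  obtain ⟨X₂, hX₂card, c₂, hc₂⟩ :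
      ∃ X : Set V₂, X.ncard = hCd2 E₂ ∧ ∃ c : V₂ → Bool,
        ∀ e ∈ E₂, (∀ x ∈ X, x ∉ e) → ∃ u ∈ e, ∃ v ∈ e, c u ≠ c v := by
    have : hCd2 E₂ ∈ {n | ∃ X : Set V₂, X.ncard = n ∧ ∃ c : V₂ → Bool,
        ∀ e ∈ E₂, (∀ x ∈ X, x ∉ e) → ∃ u ∈ e, ∃ v ∈ e, c u ≠ c v} := by
      refine Nat.sInf_mem ⟨(Set.univ : Set V₂).ncard, Set.univ, rfl, fun _ => true,
        fun e he hdisj => ?_⟩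
      obtain ⟨v, hv⟩ := hEne₂ e he
      exact absurd hv (hdisj v (Set.mem_univ v))
    obtain ⟨X, h1, h2⟩ := this
    exact ⟨X, h1, h2⟩
  have hcardV₁ : (Set.univ : Set V₁).ncard = Fintype.card V₁ := by
    rw [Set.ncard_univ, Nat.card_eq_fintype_card]
  have hcardV₂ : (Set.univ : Set V₂).ncard = Fintype.card V₂ := by
    rw [Set.ncard_univ, Nat.card_eq_fintype_card]
  -- notation for the defining sets of the join invariants
  set SC : Set ℕ := {n | ∃ X : Set (V₁ ⊕ V₂), X.ncard = n ∧ ∃ c : V₁ ⊕ V₂ → Bool,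
    ∀ e ∈ hJoin E₁ E₂, (∀ x ∈ X, x ∉ e) → ∃ u ∈ e, ∃ v ∈ e, c u ≠ c v} with hSC
  set ST : Set ℕ := {n | ∃ C : Set (V₁ ⊕ V₂), C.ncard = n ∧
    ∀ e ∈ hJoin E₁ E₂, (e ∩ C).Nonempty} with hST
  have hCd2join : hCd2 (hJoin E₁ E₂) = sInf SC := rfl
  have hTaujoin : hTau (hJoin E₁ E₂) = sInf ST := rfl
  -- upper-bound memberships
  have memC1 : hCd2 E₁ + Fintype.card V₂ ∈ SC := by
    refine ⟨Sum.inl '' X₁ ∪ Sum.inr '' Set.univ, by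
      rw [ncard_inl_union_inr, hX₁card, hcardV₂], Sum.elim c₁ (fun _ => true), ?_⟩
    rintro e (⟨f, hf, rfl⟩ | ⟨f, hf, rfl⟩ | ⟨a, b, rfl⟩) hdisj
    · have hf' : ∀ x ∈ X₁, x ∉ f := by
        intro x hx hxe
        exact hdisj (Sum.inl x) (Or.inl ⟨x, hx, rfl⟩) ⟨x, hxe, rfl⟩
      obtain ⟨u, hu, v, hv, huv⟩ := hc₁ f hf hf'
      exact ⟨Sum.inl u, ⟨u, hu, rfl⟩, Sum.inl v, ⟨v, hv, rfl⟩, huv⟩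
    · obtain ⟨v, hv⟩ := hEne₂ f hf
      exact absurd ⟨v, hv, rfl⟩
        (hdisj (Sum.inr v) (Or.inr ⟨v, Set.mem_univ v, rfl⟩))
    · exact absurd (Or.inr rfl)
        (hdisj (Sum.inr b) (Or.inr ⟨b, Set.mem_univ b, rfl⟩))
  have memC2 : Fintype.card V₁ + hCd2 E₂ ∈ SC := by
    refine ⟨Sum.inl '' Set.univ ∪ Sum.inr '' X₂, by
      rw [ncard_inl_union_inr, hX₂card, hcardV₁], Sum.elim (fun _ => true) c₂, ?_⟩
    rintro e (⟨f, hf, rfl⟩ | ⟨f, hf, rfl⟩ | ⟨a, b, rfl⟩) hdisj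
    · obtain ⟨v, hv⟩ := hEne₁ f hf
      exact absurd ⟨v, hv, rfl⟩
        (hdisj (Sum.inl v) (Or.inl ⟨v, Set.mem_univ v, rfl⟩))
    · have hf' : ∀ x ∈ X₂, x ∉ f := by
        intro x hx hxe
        exact hdisj (Sum.inr x) (Or.inr ⟨x, hx, rfl⟩) ⟨x, hxe, rfl⟩
      obtain ⟨u, hu, v, hv, huv⟩ := hc₂ f hf hf'
      exact ⟨Sum.inr u, ⟨u, hu, rfl⟩, Sum.inr v, ⟨v, hv, rfl⟩, huv⟩
    · exact absurd (Or.inl rfl)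
        (hdisj (Sum.inl a) (Or.inl ⟨a, Set.mem_univ a, rfl⟩))
  have memC3 : hTau E₁ + hTau E₂ ∈ SC := by
    refine ⟨Sum.inl '' C₁ ∪ Sum.inr '' C₂, by
      rw [ncard_inl_union_inr, hC₁card, hC₂card], Sum.elim (fun _ => true) (fun _ => false), ?_⟩
    rintro e (⟨f, hf, rfl⟩ | ⟨f, hf, rfl⟩ | ⟨a, b, rfl⟩) hdisj
    · obtain ⟨v, hvf, hvC⟩ := hC₁cov f hf
      exact absurd ⟨v, hvf, rfl⟩ (hdisj (Sum.inl v) (Or.inl ⟨v, hvC, rfl⟩))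
    · obtain ⟨v, hvf, hvC⟩ := hC₂cov f hf
      exact absurd ⟨v, hvf, rfl⟩ (hdisj (Sum.inr v) (Or.inr ⟨v, hvC, rfl⟩))
    · exact ⟨Sum.inl a, Or.inl rfl, Sum.inr b, Or.inr rfl, by simp⟩
  have memT1 : hTau E₁ + Fintype.card V₂ ∈ ST := by
    refine ⟨Sum.inl '' C₁ ∪ Sum.inr '' Set.univ, by
      rw [ncard_inl_union_inr, hC₁card, hcardV₂], ?_⟩
    rintro e (⟨f, hf, rfl⟩ | ⟨f, hf, rfl⟩ | ⟨a, b, rfl⟩)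
    · obtain ⟨v, hvf, hvC⟩ := hC₁cov f hf
      exact ⟨Sum.inl v, ⟨v, hvf, rfl⟩, Or.inl ⟨v, hvC, rfl⟩⟩
    · obtain ⟨v, hv⟩ := hEne₂ f hf
      exact ⟨Sum.inr v, ⟨v, hv, rfl⟩, Or.inr ⟨v, Set.mem_univ v, rfl⟩⟩
    · exact ⟨Sum.inr b, Or.inr rfl, Or.inr ⟨b, Set.mem_univ b, rfl⟩⟩
  have memT2 : Fintype.card V₁ + hTau E₂ ∈ ST := by
    refine ⟨Sum.inl '' Set.univ ∪ Sum.inr '' C₂, by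
      rw [ncard_inl_union_inr, hC₂card, hcardV₁], ?_⟩
    rintro e (⟨f, hf, rfl⟩ | ⟨f, hf, rfl⟩ | ⟨a, b, rfl⟩)
    · obtain ⟨v, hv⟩ := hEne₁ f hf
      exact ⟨Sum.inl v, ⟨v, hv, rfl⟩, Or.inl ⟨v, Set.mem_univ v, rfl⟩⟩
    · obtain ⟨v, hvf, hvC⟩ := hC₂cov f hf
      exact ⟨Sum.inr v, ⟨v, hvf, rfl⟩, Or.inr ⟨v, hvC, rfl⟩⟩
    · exact ⟨Sum.inl a, Or.inl rfl, Or.inl ⟨a, Set.mem_univ a, rfl⟩⟩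
  constructor
  · rw [hCd2join]
    refine le_antisymm
      (le_min (Nat.sInf_le memC1) (le_min (Nat.sInf_le memC3) (Nat.sInf_le memC2)))
      (le_csInf ⟨_, memC3⟩ ?_)
    rintro n ⟨X, rfl, c, hc⟩
    rw [ncard_sum_split X]
    by_cases hS2 : ∀ b : V₂, Sum.inr b ∈ X
    · -- right side fully deleted
      have h2univ : (Sum.inr ⁻¹' X : Set V₂) = Set.univ := by
        ext b; simpa using hS2 b
      have hmem : (Sum.inl ⁻¹' X : Set V₁).ncard ∈
          {n | ∃ Y : Set V₁, Y.ncard = n ∧ ∃ c : V₁ → Bool,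
            ∀ e ∈ E₁, (∀ x ∈ Y, x ∉ e) → ∃ u ∈ e, ∃ v ∈ e, c u ≠ c v} := by
        refine ⟨_, rfl, fun v => c (Sum.inl v), fun e he hdisj => ?_⟩
        have : ∀ x ∈ X, x ∉ Sum.inl '' e := by
          rintro x hx ⟨v, hve, rfl⟩
          exact hdisj v hx hve
        obtain ⟨u, ⟨p, hp, rfl⟩, v, ⟨q, hq, rfl⟩, huv⟩ :=
          hc (Sum.inl '' e) (Or.inl ⟨e, he, rfl⟩) this
        exact ⟨p, hp, q, hq, huv⟩
      have h1 : hCd2 E₁ ≤ (Sum.inl ⁻¹' X : Set V₁).ncard := Nat.sInf_le hmem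
      have h2 : (Sum.inr ⁻¹' X : Set V₂).ncard = Fintype.card V₂ := by
        rw [h2univ, hcardV₂]
      calc min (hCd2 E₁ + Fintype.card V₂) _ ≤ hCd2 E₁ + Fintype.card V₂ := min_le_left _ _
        _ ≤ _ := by omega
    · push_neg at hS2
      obtain ⟨b₀, hb₀⟩ := hS2
      by_cases hS1 : ∀ a : V₁, Sum.inl a ∈ X
      · have h1univ : (Sum.inl ⁻¹' X : Set V₁) = Set.univ := by
          ext a; simpa using hS1 a
        have hmem : (Sum.inr ⁻¹' X : Set V₂).ncard ∈
            {n | ∃ Y : Set V₂, Y.ncard = n ∧ ∃ c : V₂ → Bool,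
              ∀ e ∈ E₂, (∀ x ∈ Y, x ∉ e) → ∃ u ∈ e, ∃ v ∈ e, c u ≠ c v} := by
          refine ⟨_, rfl, fun v => c (Sum.inr v), fun e he hdisj => ?_⟩
          have : ∀ x ∈ X, x ∉ Sum.inr '' e := by
            rintro x hx ⟨v, hve, rfl⟩
            exact hdisj v hx hve
          obtain ⟨u, ⟨p, hp, rfl⟩, v, ⟨q, hq, rfl⟩, huv⟩ :=
            hc (Sum.inr '' e) (Or.inr <| Or.inl ⟨e, he, rfl⟩) this
          exact ⟨p, hp, q, hq, huv⟩
        have h1 : hCd2 E₂ ≤ (Sum.inr ⁻¹' X : Set V₂).ncard := Nat.sInf_le hmem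
        have h2 : (Sum.inl ⁻¹' X : Set V₁).ncard = Fintype.card V₁ := by
          rw [h1univ, hcardV₁]
        calc min (hCd2 E₁ + Fintype.card V₂)
              (min (hTau E₁ + hTau E₂) (Fintype.card V₁ + hCd2 E₂))
            ≤ Fintype.card V₁ + hCd2 E₂ := le_trans (min_le_right _ _) (min_le_right _ _)
          _ ≤ _ := by omega
      · push_neg at hS1
        obtain ⟨a₀, ha₀⟩ := hS1
        -- uncovered pairs force the coloring pattern
        have key : ∀ a : V₁, ∀ b : V₂, Sum.inl a ∉ X → Sum.inr b ∉ X →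
            c (Sum.inl a) ≠ c (Sum.inr b) := by
          intro a b ha hb
          have hdisj : ∀ x ∈ X, x ∉ ({Sum.inl a, Sum.inr b} : Set (V₁ ⊕ V₂)) := by
            rintro x hx (rfl | rfl)
            · exact ha hx
            · exact hb hx
          obtain ⟨u, hu, v, hv, huv⟩ :=
            hc {Sum.inl a, Sum.inr b} (Or.inr <| Or.inr ⟨a, b, rfl⟩) hdisj
          rcases hu with rfl | rfl <;> rcases hv with rfl | rfl
          · exact absurd rfl huv
          · exact huv
          · exact fun h => huv (h.symm)
          · exact absurd rfl huv
        have cov1 : (Sum.inl ⁻¹' X : Set V₁).ncard ∈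
            {n | ∃ C : Set V₁, C.ncard = n ∧ ∀ e ∈ E₁, (e ∩ C).Nonempty} := by
          refine ⟨_, rfl, fun e he => ?_⟩
          by_contra hne
          have hdis : ∀ v ∈ e, Sum.inl v ∉ X := by
            intro v hv hvX
            exact hne ⟨v, hv, hvX⟩
          have hdisj : ∀ x ∈ X, x ∉ Sum.inl '' e := by
            rintro x hx ⟨v, hve, rfl⟩
            exact hdis v hve hx
          obtain ⟨u, ⟨p, hp, rfl⟩, v, ⟨q, hq, rfl⟩, huv⟩ :=
            hc (Sum.inl '' e) (Or.inl ⟨e, he, rfl⟩) hdisj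
          exact huv (bool_eq_of_ne (key p b₀ (hdis p hp) hb₀) (key q b₀ (hdis q hq) hb₀))
        have cov2 : (Sum.inr ⁻¹' X : Set V₂).ncard ∈
            {n | ∃ C : Set V₂, C.ncard = n ∧ ∀ e ∈ E₂, (e ∩ C).Nonempty} := by
          refine ⟨_, rfl, fun e he => ?_⟩
          by_contra hne
          have hdis : ∀ v ∈ e, Sum.inr v ∉ X := by
            intro v hv hvX
            exact hne ⟨v, hv, hvX⟩
          have hdisj : ∀ x ∈ X, x ∉ Sum.inr '' e := by
            rintro x hx ⟨v, hve, rfl⟩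
            exact hdis v hve hx
          obtain ⟨u, ⟨p, hp, rfl⟩, v, ⟨q, hq, rfl⟩, huv⟩ :=
            hc (Sum.inr '' e) (Or.inr <| Or.inl ⟨e, he, rfl⟩) hdisj
          have k1 := key a₀ p ha₀ (hdis p hp)
          have k2 := key a₀ q ha₀ (hdis q hq)
          exact huv (bool_eq_of_ne (fun h => k1 h.symm) (fun h => k2 h.symm))
        have h1 : hTau E₁ ≤ (Sum.inl ⁻¹' X : Set V₁).ncard := Nat.sInf_le cov1
        have h2 : hTau E₂ ≤ (Sum.inr ⁻¹' X : Set V₂).ncard := Nat.sInf_le cov2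
        calc min (hCd2 E₁ + Fintype.card V₂)
              (min (hTau E₁ + hTau E₂) (Fintype.card V₁ + hCd2 E₂))
            ≤ hTau E₁ + hTau E₂ := le_trans (min_le_right _ _) (min_le_left _ _)
          _ ≤ _ := by omega
  · rw [hTaujoin]
    refine le_antisymm
      (le_min (Nat.sInf_le memT1) (Nat.sInf_le memT2))
      (le_csInf ⟨_, memT1⟩ ?_)
    rintro n ⟨C, rfl, hcov⟩
    rw [ncard_sum_split C]
    by_cases hS2 : ∀ b : V₂, Sum.inr b ∈ C
    · have h2univ : (Sum.inr ⁻¹' C : Set V₂) = Set.univ := by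
        ext b; simpa using hS2 b
      have cov1 : (Sum.inl ⁻¹' C : Set V₁).ncard ∈
          {n | ∃ D : Set V₁, D.ncard = n ∧ ∀ e ∈ E₁, (e ∩ D).Nonempty} := by
        refine ⟨_, rfl, fun e he => ?_⟩
        obtain ⟨x, hxe, hxC⟩ := hcov (Sum.inl '' e) (Or.inl ⟨e, he, rfl⟩)
        obtain ⟨v, hve, rfl⟩ := hxe
        exact ⟨v, hve, hxC⟩
      have h1 : hTau E₁ ≤ (Sum.inl ⁻¹' C : Set V₁).ncard := Nat.sInf_le cov1
      have h2 : (Sum.inr ⁻¹' C : Set V₂).ncard = Fintype.card V₂ := by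
        rw [h2univ, hcardV₂]
      calc min (hTau E₁ + Fintype.card V₂) (Fintype.card V₁ + hTau E₂)
          ≤ hTau E₁ + Fintype.card V₂ := min_le_left _ _
        _ ≤ _ := by omega
    · push_neg at hS2
      obtain ⟨b₀, hb₀⟩ := hS2
      have h1univ : (Sum.inl ⁻¹' C : Set V₁) = Set.univ := by
        ext a
        simp only [Set.mem_preimage, Set.mem_univ, iff_true]
        obtain ⟨x, hxe, hxC⟩ := hcov {Sum.inl a, Sum.inr b₀} (Or.inr <| Or.inr ⟨a, b₀, rfl⟩)
        rcases hxe with rfl | rfl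
        · exact hxC
        · exact absurd hxC hb₀
      have cov2 : (Sum.inr ⁻¹' C : Set V₂).ncard ∈
          {n | ∃ D : Set V₂, D.ncard = n ∧ ∀ e ∈ E₂, (e ∩ D).Nonempty} := by
        refine ⟨_, rfl, fun e he => ?_⟩
        obtain ⟨x, hxe, hxC⟩ := hcov (Sum.inr '' e) (Or.inr <| Or.inl ⟨e, he, rfl⟩)
        obtain ⟨v, hve, rfl⟩ := hxe
        exact ⟨v, hve, hxC⟩
      have h2 : hTau E₂ ≤ (Sum.inr ⁻¹' C : Set V₂).ncard := Nat.sInf_le cov2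
      have h1 : (Sum.inl ⁻¹' C : Set V₁).ncard = Fintype.card V₁ := by
        rw [h1univ, hcardV₁]
      calc min (hTau E₁ + Fintype.card V₂) (Fintype.card V₁ + hTau E₂)
          ≤ Fintype.card V₁ + hTau E₂ := min_le_right _ _
        _ ≤ _ := by omega
end
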